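/- Let k ≥ 2 be an integer, let G be a finite connected simple graph, and let H be a finite simple graph that contains an isolated vertex and satisfies γ_{[1,k]}(H) > k. If G admits a total [1,k]-dominating set, then γ_{[1,k]}(G ∘ H) = γ_{t[1,k]}(G). -/

import Mathlib

/-!
Upper bound: for an isolated vertex `b` of `H` and a total `[1,k]`-dominating set `D` of `G`, the
copy `D × {b}` is `[1,k]`-dominating in `G ∘ H`, since the neighbours of any vertex in it are
exactly the copies of its `G`-neighbours in `D`.

Lower bound: the projection to `G` of a minimum `[1,k]`-dominating set `S` of `G ∘ H` is total
`[1,k]`-dominating. A vertex `(g, y) ∉ S` is adjacent to a vertex of `S` over each `G`-neighbour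
of `g` that the projection contains, so it suffices that no fiber of `S` over `G` is full: a full
fiber forces the fibers over its neighbours to be full (otherwise some vertex would see `|H| > k`
vertices of `S`), hence by connectivity `S` is everything, far more than `γ_t(G)` vertices.
Each `g` has a neighbour whose fiber is nonempty: otherwise the fiber over `g` would be a
`[1,k]`-dominating set of `H`, so of size more than `k`, and every vertex over a neighbour of `g`
would see all of it.
-/

/-- `D` is a `[1,k]`-dominating set of `G`: every vertex outside `D` is adjacent to
at least one and at most `k` vertices of `D`. -/
def IsOneKDom {V : Type*} (G : SimpleGraph V) (k : ℕ) (D : Set V) : Prop :=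
  ∀ v ∉ D, 1 ≤ {u ∈ D | G.Adj v u}.ncard ∧ {u ∈ D | G.Adj v u}.ncard ≤ k

/-- `D` is a total `[1,k]`-dominating set of `G`: every vertex is adjacent to
at least one and at most `k` vertices of `D`. -/
def IsTotalOneKDom {V : Type*} (G : SimpleGraph V) (k : ℕ) (D : Set V) : Prop :=
  ∀ v : V, 1 ≤ {u ∈ D | G.Adj v u}.ncard ∧ {u ∈ D | G.Adj v u}.ncard ≤ k

/-- The `[1,k]`-domination number: minimum cardinality of a `[1,k]`-dominating set. -/
noncomputable def oneKDomNum {V : Type*} [Fintype V] (G : SimpleGraph V) (k : ℕ) : ℕ :=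
  sInf {m | ∃ D : Set V, IsOneKDom G k D ∧ D.ncard = m}

/-- The total `[1,k]`-domination number: minimum cardinality of a total
`[1,k]`-dominating set. -/
noncomputable def totalOneKDomNum {V : Type*} [Fintype V] (G : SimpleGraph V) (k : ℕ) : ℕ :=
  sInf {m | ∃ D : Set V, IsTotalOneKDom G k D ∧ D.ncard = m}

/-- The lexicographic product `G ∘ H`. -/
def lexProd {α β : Type*} (G : SimpleGraph α) (H : SimpleGraph β) :
    SimpleGraph (α × β) where
  Adj a b := G.Adj a.1 b.1 ∨ (a.1 = b.1 ∧ H.Adj a.2 b.2)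
  symm := by
    constructor
    rintro ⟨g, h⟩ ⟨g', h'⟩ (hadj | ⟨rfl, hadj⟩)
    · exact Or.inl hadj.symm
    · exact Or.inr ⟨rfl, hadj.symm⟩
  loopless := by
    constructor
    rintro ⟨g, h⟩ (hadj | ⟨-, hadj⟩)
    · exact G.ne_of_adj hadj rfl
    · exact H.ne_of_adj hadj rfl

section Domination

variable {V : Type*} {G : SimpleGraph V} {k : ℕ} {D : Set V}

lemma IsTotalOneKDom.isOneKDom (hD : IsTotalOneKDom G k D) : IsOneKDom G k D :=
  fun v _ => hD v

lemma isOneKDom_univ (G : SimpleGraph V) (k : ℕ) : IsOneKDom G k Set.univ :=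
  fun v hv => absurd (Set.mem_univ v) hv

lemma IsTotalOneKDom.exists_adj (hD : IsTotalOneKDom G k D) (v : V) : ∃ u, G.Adj v u := by
  obtain ⟨u, -, hu⟩ := Set.nonempty_of_ncard_ne_zero (Nat.one_le_iff_ne_zero.mp (hD v).1)
  exact ⟨u, hu⟩

variable [Fintype V]

lemma oneKDomNum_le (hD : IsOneKDom G k D) : oneKDomNum G k ≤ D.ncard :=
  Nat.sInf_le ⟨D, hD, rfl⟩

lemma totalOneKDomNum_le (hD : IsTotalOneKDom G k D) : totalOneKDomNum G k ≤ D.ncard :=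
  Nat.sInf_le ⟨D, hD, rfl⟩

lemma exists_isOneKDom_ncard_eq_oneKDomNum (G : SimpleGraph V) (k : ℕ) :
    ∃ D, IsOneKDom G k D ∧ D.ncard = oneKDomNum G k :=
  Nat.sInf_mem (s := {m | ∃ D : Set V, IsOneKDom G k D ∧ D.ncard = m})
    ⟨_, Set.univ, isOneKDom_univ G k, rfl⟩

lemma IsTotalOneKDom.exists_ncard_eq_totalOneKDomNum (hD : IsTotalOneKDom G k D) :
    ∃ D', IsTotalOneKDom G k D' ∧ D'.ncard = totalOneKDomNum G k :=
  Nat.sInf_mem (s := {m | ∃ D : Set V, IsTotalOneKDom G k D ∧ D.ncard = m})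
    ⟨_, D, hD, rfl⟩

lemma oneKDomNum_le_card (G : SimpleGraph V) (k : ℕ) : oneKDomNum G k ≤ Nat.card V :=
  (oneKDomNum_le (isOneKDom_univ G k)).trans (Set.ncard_univ V).le

lemma IsTotalOneKDom.totalOneKDomNum_le_card (hD : IsTotalOneKDom G k D) :
    totalOneKDomNum G k ≤ Nat.card V :=
  (totalOneKDomNum_le hD).trans (Set.ncard_le_card D)

end Domination

section LexProd

variable {α β : Type*}

lemma lexProd_adj (G : SimpleGraph α) (H : SimpleGraph β) (a b : α × β) :
    (lexProd G H).Adj a b ↔ G.Adj a.1 b.1 ∨ (a.1 = b.1 ∧ H.Adj a.2 b.2) :=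
  Iff.rfl

variable {G : SimpleGraph α} {H : SimpleGraph β} {k : ℕ}

lemma IsTotalOneKDom.lexProd_of_isolated {D : Set α} (hD : IsTotalOneKDom G k D) {b : β}
    (hb : ∀ w, ¬ H.Adj b w) : IsTotalOneKDom (lexProd G H) k ((·, b) '' D) := by
  intro v
  have hneighbors : {u ∈ (·, b) '' D | (lexProd G H).Adj v u}
      = (·, b) '' {u ∈ D | G.Adj v.1 u} := by
    ext ⟨a, y⟩
    simp only [Set.mem_ofPred_eq, Set.mem_image, Prod.mk.injEq, lexProd_adj]
    constructor
    · rintro ⟨⟨a', ha', rfl, rfl⟩, hadj | ⟨-, hadj⟩⟩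
      · exact ⟨a', ⟨ha', hadj⟩, rfl, rfl⟩
      · exact absurd hadj.symm (hb _)
    · rintro ⟨a', ⟨ha', hadj⟩, rfl, rfl⟩
      exact ⟨⟨a', ha', rfl, rfl⟩, Or.inl hadj⟩
  rw [hneighbors, Set.ncard_image_of_injective _ (Prod.mk_left_injective b)]
  exact hD v.1

variable {S : Set (α × β)}

lemma IsOneKDom.isOneKDom_fiber_of_forall_adj_not_mem (hS : IsOneKDom (lexProd G H) k S)
    {g : α} (hnbrs : ∀ a, G.Adj g a → ∀ y, (a, y) ∉ S) :
    IsOneKDom H k (Prod.mk g ⁻¹' S) := by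
  intro y hy
  have hneighbors : {u ∈ S | (lexProd G H).Adj (g, y) u}
      = Prod.mk g '' {z ∈ Prod.mk g ⁻¹' S | H.Adj y z} := by
    ext ⟨a, z⟩
    simp only [Set.mem_ofPred_eq, Set.mem_image, Set.mem_preimage, Prod.mk.injEq, lexProd_adj]
    constructor
    · rintro ⟨hmem, hadj | ⟨rfl, hadj⟩⟩
      · exact absurd hmem (hnbrs a hadj z)
      · exact ⟨z, ⟨hmem, hadj⟩, rfl, rfl⟩
    · rintro ⟨z, ⟨hmem, hadj⟩, rfl, rfl⟩
      exact ⟨hmem, Or.inr ⟨rfl, hadj⟩⟩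
  rw [← Set.ncard_image_of_injective _ (Prod.mk_right_injective g), ← hneighbors]
  exact hS (g, y) hy

variable [Finite α] [Finite β]

lemma ncard_preimage_mk_le_of_adj {g a : α} (hga : G.Adj g a) (y : β) :
    (Prod.mk a ⁻¹' S).ncard ≤ {u ∈ S | (lexProd G H).Adj (g, y) u}.ncard :=
  Set.ncard_le_ncard_of_injOn (Prod.mk a) (fun _ hz => ⟨hz, Or.inl hga⟩)
    (Prod.mk_right_injective a).injOn

lemma ncard_image_fst_adj_le (g : α) (y : β) :
    {u ∈ Prod.fst '' S | G.Adj g u}.ncard ≤ {u ∈ S | (lexProd G H).Adj (g, y) u}.ncard := by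
  classical
  let lift : α → α × β := fun u => (u, if hu : ∃ z, (u, z) ∈ S then hu.choose else y)
  refine Set.ncard_le_ncard_of_injOn lift ?_ (fun _ _ _ _ h => congrArg Prod.fst h)
  rintro _ ⟨⟨p, hp, rfl⟩, hadj⟩
  have hex : ∃ z, (p.1, z) ∈ S := ⟨p.2, hp⟩
  simp only [lift, dif_pos hex]
  exact ⟨hex.choose_spec, Or.inl hadj⟩

lemma IsOneKDom.lexProd_fiber_full_of_adj (hS : IsOneKDom (lexProd G H) k S)
    (hβ : k < Nat.card β) {a b : α} (hab : G.Adj a b) (hfull : ∀ y, (a, y) ∈ S) (y : β) :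
    (b, y) ∈ S := by
  by_contra hy
  have hcount := (hS (b, y) hy).2
  have := ncard_preimage_mk_le_of_adj (H := H) (S := S) hab.symm y
  rw [show Prod.mk a ⁻¹' S = Set.univ from Set.eq_univ_of_forall hfull, Set.ncard_univ] at this
  omega

lemma IsOneKDom.lexProd_eq_univ_of_fiber_full (hS : IsOneKDom (lexProd G H) k S)
    (hconn : G.Connected) (hβ : k < Nat.card β) {g₀ : α} (hfull : ∀ y, (g₀, y) ∈ S) :
    S = Set.univ := by
  refine Set.eq_univ_of_forall fun ⟨g, y⟩ => ?_
  induction (SimpleGraph.reachable_iff_reflTransGen g₀ g).mp (hconn g₀ g) generalizing y with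
  | refl => exact hfull y
  | tail _ hab ih => exact hS.lexProd_fiber_full_of_adj hβ hab ih y

lemma IsOneKDom.lexProd_exists_not_mem (hS : IsOneKDom (lexProd G H) k S)
    (hconn : G.Connected) (hβ : k < Nat.card β) (hne : S ≠ Set.univ) (g : α) :
    ∃ y, (g, y) ∉ S := by
  by_contra! hfull
  exact hne (hS.lexProd_eq_univ_of_fiber_full hconn hβ hfull)

lemma IsOneKDom.isTotalOneKDom_image_fst (hS : IsOneKDom (lexProd G H) k S)
    (hnotfull : ∀ g, ∃ y, (g, y) ∉ S) 
    (hnbr : ∀ g, ∃ a, G.Adj g a ∧ ∃ y, (a, y) ∈ S) :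
    IsTotalOneKDom G k (Prod.fst '' S) := by
  intro g
  constructor
  · obtain ⟨a, hga, y, hy⟩ := hnbr g
    exact (Set.ncard_pos).mpr ⟨a, ⟨(a, y), hy, rfl⟩, hga⟩
  · obtain ⟨y, hy⟩ := hnotfull g
    exact (ncard_image_fst_adj_le g y).trans (hS (g, y) hy).2

end LexProd

section Fintype

variable {α β : Type*} [Fintype α] [Fintype β] {G : SimpleGraph α} {H : SimpleGraph β}
  {k : ℕ}

lemma oneKDomNum_lexProd_le_totalOneKDomNum {b : β} (hb : ∀ w, ¬ H.Adj b w) {D : Set α}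
    (hD : IsTotalOneKDom G k D) : oneKDomNum (lexProd G H) k ≤ totalOneKDomNum G k := by
  obtain ⟨D', hD', hD'card⟩ := hD.exists_ncard_eq_totalOneKDomNum
  calc oneKDomNum (lexProd G H) k ≤ ((·, b) '' D').ncard :=
        oneKDomNum_le (hD'.lexProd_of_isolated hb).isOneKDom
    _ = totalOneKDomNum G k := by
        rw [Set.ncard_image_of_injective _ (Prod.mk_left_injective b), hD'card]

lemma IsOneKDom.lexProd_exists_adj_fiber_nonempty {S : Set (α × β)}
    (hS : IsOneKDom (lexProd G H) k S) (hH : k < oneKDomNum H k) {g : α} (hg : ∃ a, G.Adj g a) :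
    ∃ a, G.Adj g a ∧ ∃ y, (a, y) ∈ S := by
  by_contra! hnbrs
  obtain ⟨a, hga⟩ := hg
  have hfiber := hH.trans_le (oneKDomNum_le (hS.isOneKDom_fiber_of_forall_adj_not_mem hnbrs))
  obtain ⟨y, hy⟩ := Set.nonempty_of_ncard_ne_zero (s := Prod.mk g ⁻¹' S) (by omega)
  have hcount := (hS (a, y) (hnbrs a hga y)).2
  have := ncard_preimage_mk_le_of_adj (H := H) (S := S) hga.symm y
  omega

end Fintype

/-- Theorem 4.4 of [GIPS], first case: if `k ≥ 2`, `G` is a finite connected graph,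
`H` is a finite graph with an isolated vertex and `γ_[1,k](H) > k`, and `G` has a
total `[1,k]`-dominating set, then `γ_[1,k](G ∘ H) = γ_t[1,k](G)`. -/
theorem lexProd_oneKDomNum_eq_totalOneKDomNum
    {α β : Type*} [Fintype α] [Fintype β] (k : ℕ) (hk : 2 ≤ k)
    (G : SimpleGraph α) (H : SimpleGraph β)
    (hGconn : G.Connected)
    (hiso : ∃ v : β, ∀ w : β, ¬ H.Adj v w)
    (hH : k < oneKDomNum H k)
    (hT : ∃ D : Set α, IsTotalOneKDom G k D) :
    oneKDomNum (lexProd G H) k = totalOneKDomNum G k := by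
  obtain ⟨b₀, hb₀⟩ := hiso
  obtain ⟨D₀, hD₀⟩ := hT
  have hle := oneKDomNum_lexProd_le_totalOneKDomNum hb₀ hD₀
  obtain ⟨S, hS, hScard⟩ := exists_isOneKDom_ncard_eq_oneKDomNum (lexProd G H) k
  have hβ : k < Nat.card β := hH.trans_le (oneKDomNum_le_card H k)
  have hne : S ≠ Set.univ := by
    rintro rfl
    have hα : 0 < Nat.card α := have := hGconn.nonempty; Nat.card_pos
    have hβ₂ : Nat.card α * 2 ≤ Nat.card α * Nat.card β := Nat.mul_le_mul_left _ (by omega)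
    have : Nat.card α * Nat.card β ≤ Nat.card α :=
      calc Nat.card α * Nat.card β = (Set.univ : Set (α × β)).ncard := by
            rw [Set.ncard_univ, Nat.card_prod]
        _ = oneKDomNum (lexProd G H) k := hScard
        _ ≤ totalOneKDomNum G k := hle
        _ ≤ Nat.card α := hD₀.totalOneKDomNum_le_card
    omega
  refine le_antisymm hle ?_
  calc totalOneKDomNum G k ≤ (Prod.fst '' S).ncard :=
        totalOneKDomNum_le <|
          hS.isTotalOneKDom_image_fst (hS.lexProd_exists_not_mem hGconn hβ hne) fun g =>
            hS.lexProd_exists_adj_fiber_nonempty hH (hD₀.exists_adj g)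
    _ ≤ S.ncard := Set.ncard_image_le
    _ = oneKDomNum (lexProd G H) k := hScard
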